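/- arXiv:2512.05640 — 2 statements merged into one kernel-verified Lean document; each statement's English description precedes it below -/
import Mathlib

section
/- Let X, Y be real normed linear spaces and E a dual Banach space (E = F* for a Banach space F). Then there exists a norm-one linear projection P from BLip₀(X,Y;E) onto Blin(X,Y;E), i.e. a bounded linear map P with ‖P‖ ≤ 1, P(T) bilinear for every T, and P(S) = S for every bounded bilinear S. In particular Blin(X,Y;E) is complemented in BLip₀(X,Y;E). -/
/-- `T` is two-Lipschitz with constant `k`. -/
def TwoLipWith {X Y E : Type*} [NormedAddCommGroup X] [NormedAddCommGroup Y]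
    [NormedAddCommGroup E] (k : ℝ) (T : X → Y → E) : Prop :=
  ∀ (x x' : X) (y y' : Y),
    ‖T x y - T x' y - T x y' + T x' y'‖ ≤ k * ‖x - x'‖ * ‖y - y'‖

/-- Membership in `BLip₀(X,Y;E)`. -/
def MemBLip0 {X Y E : Type*} [NormedAddCommGroup X] [NormedAddCommGroup Y]
    [NormedAddCommGroup E] (T : X → Y → E) : Prop :=
  (∃ k : ℝ, 0 ≤ k ∧ TwoLipWith k T) ∧ (∀ x : X, T x 0 = 0) ∧ (∀ y : Y, T 0 y = 0)

/-- `T` is bilinear (linear in each variable separately). -/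
def IsBilin {X Y E : Type*} [NormedAddCommGroup X] [NormedSpace ℝ X]
    [NormedAddCommGroup Y] [NormedSpace ℝ Y] [NormedAddCommGroup E] [NormedSpace ℝ E]
    (T : X → Y → E) : Prop :=
  (∀ (x x' : X) (y : Y), T (x + x') y = T x y + T x' y) ∧
  (∀ (c : ℝ) (x : X) (y : Y), T (c • x) y = c • T x y) ∧
  (∀ (x : X) (y y' : Y), T x (y + y') = T x y + T x y') ∧
  (∀ (c : ℝ) (x : X) (y : Y), T x (c • y) = c • T x y)

/-!
An invariant mean `M` on the bounded `E`-valued functions on the abelian group `X × Y` is applied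
to the mixed difference `φ_T^{x,y}`. Since `φ_T^{x+x',y}` is `φ_T^{x,y}` translated by `(x', 0)`
plus `φ_T^{x',y}`, invariance makes `P T` additive in each variable; the bound
`‖φ_T^{x,y}‖ ≤ k ‖x‖ ‖y‖` makes it continuous, hence `ℝ`-bilinear, with `‖P T‖ ≤ k`; and for
bilinear `T` the mixed difference is the constant `T x y`. The mean exists because `E = F*`:
a real invariant mean comes from Hahn–Banach with the sublinear functional "infimum of upper
bounds of finite averages of translates" (which telescoping shows kills `f (· + a) - f`), and
is made `E`-valued by testing against `v ∈ F`.
-/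

open Filter Pointwise

lemma exists_linearMap_le_sublinear {V : Type*} [AddCommGroup V] [Module ℝ V] (N : V → ℝ)
    (N_hom : ∀ c : ℝ, 0 < c → ∀ x, N (c • x) = c * N x) (N_add : ∀ x y, N (x + y) ≤ N x + N y) :
    ∃ φ : V →ₗ[ℝ] ℝ, ∀ x, φ x ≤ N x := by
  have N_zero : N 0 = 0 := by
    have := N_hom 2 two_pos 0
    rw [smul_zero] at this
    linarith
  obtain ⟨φ, -, hφ⟩ := exists_extension_of_le_sublinear ⟨⊥, 0⟩ N N_hom N_add fun ⟨x, hx⟩ => by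
    obtain rfl := (Submodule.mem_bot ℝ).1 hx
    simp [N_zero]
  exact ⟨φ, hφ⟩

def boundedFunctions (G E : Type*) [NormedAddCommGroup E] [NormedSpace ℝ E] :
    Submodule ℝ (G → E) where
  carrier := {f | ∃ C, ∀ x, ‖f x‖ ≤ C}
  add_mem' := fun ⟨C, hC⟩ ⟨D, hD⟩ =>
    ⟨C + D, fun x => (norm_add_le _ _).trans (add_le_add (hC x) (hD x))⟩
  zero_mem' := ⟨0, fun _ => norm_zero.le⟩
  smul_mem' c _ := fun ⟨C, hC⟩ =>
    ⟨‖c‖ * C, fun x => (norm_smul c _).trans_le (mul_le_mul_of_nonneg_left (hC x) (norm_nonneg c))⟩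

lemma comp_add_mem_boundedFunctions {G E : Type*} [Add G] [NormedAddCommGroup E]
    [NormedSpace ℝ E] {f : G → E} (hf : f ∈ boundedFunctions G E) (a : G) :
    (fun x => f (x + a)) ∈ boundedFunctions G E :=
  let ⟨C, hC⟩ := hf
  ⟨C, fun x => hC (x + a)⟩

structure IsInvariantMean {G E : Type*} [Add G] [NormedAddCommGroup E] [NormedSpace ℝ E]
    (M : (G → E) →ₗ[ℝ] E) : Prop where
  norm_le : ∀ (f : G → E) (C : ℝ), (∀ x, ‖f x‖ ≤ C) → ‖M f‖ ≤ C
  map_comp_add : ∀ f ∈ boundedFunctions G E, ∀ a, M (fun x => f (x + a)) = M f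
  map_const : ∀ c, M (fun _ => c) = c

namespace InvariantMean

variable {G : Type*} [AddCommGroup G] {f g : G → ℝ} {c d C : ℝ}

def upperAverages (f : G → ℝ) : Set ℝ :=
  {c | ∃ n : ℕ, 0 < n ∧ ∃ v : Fin n → G, ∀ x, ∑ i, f (x + v i) ≤ n * c}

noncomputable def upperMean (f : G → ℝ) : ℝ := sInf (upperAverages f)

lemma mem_upperAverages_of_le (h : ∀ x, f x ≤ C) : C ∈ upperAverages f :=
  ⟨1, one_pos, fun _ => 0, fun x => by simpa using h x⟩

lemma le_of_mem_upperAverages (h : ∀ x, C ≤ f x) (hc : c ∈ upperAverages f) : C ≤ c := by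
  obtain ⟨n, hn, v, hv⟩ := hc
  have : n * C ≤ n * c := by
    simpa using (Finset.sum_le_sum fun i _ => h (0 + v i)).trans (hv 0)
  exact le_of_mul_le_mul_left this (by exact_mod_cast hn)

lemma add_mem_upperAverages (hc : c ∈ upperAverages f) (hd : d ∈ upperAverages g) :
    c + d ∈ upperAverages (f + g) := by
  obtain ⟨n, hn, v, hv⟩ := hc
  obtain ⟨m, hm, w, hw⟩ := hd
  refine ⟨n * m, Nat.mul_pos hn hm, fun k => v (finProdFinEquiv.symm k).1 +
    w (finProdFinEquiv.symm k).2, fun x => ?_⟩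
  rw [finProdFinEquiv.symm.sum_comp (fun p => (f + g) (x + (v p.1 + w p.2))),
    Fintype.sum_prod_type]
  have hf : ∀ j, ∑ i, f ((x + w j) + v i) ≤ n * c := fun j => hv (x + w j)
  have hg : ∀ i, ∑ j, g ((x + v i) + w j) ≤ m * d := fun i => hw (x + v i)
  calc ∑ i, ∑ j, (f + g) (x + (v i + w j))
      = ∑ j, ∑ i, f ((x + w j) + v i) + ∑ i, ∑ j, g ((x + v i) + w j) := by
        simp only [Pi.add_apply, Finset.sum_add_distrib]
        rw [Finset.sum_comm]
        congr 1 <;> simp only [add_comm, add_left_comm]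
    _ ≤ ∑ _j : Fin m, n * c + ∑ _i : Fin n, m * d :=
        add_le_add (Finset.sum_le_sum fun j _ => hf j) (Finset.sum_le_sum fun i _ => hg i)
    _ = ↑(n * m) * (c + d) := by
        simp only [Finset.sum_const, Finset.card_univ, Fintype.card_fin, nsmul_eq_mul,
          Nat.cast_mul]
        ring

lemma bddBelow_upperAverages (hf : f ∈ boundedFunctions G ℝ) : BddBelow (upperAverages f) := by
  obtain ⟨C, hC⟩ := hf
  exact ⟨-C, fun c => le_of_mem_upperAverages fun x => (abs_le.1 (hC x)).1⟩

lemma upperAverages_nonempty (hf : f ∈ boundedFunctions G ℝ) : (upperAverages f).Nonempty := by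
  obtain ⟨C, hC⟩ := hf
  exact ⟨C, mem_upperAverages_of_le fun x => (abs_le.1 (hC x)).2⟩

lemma upperMean_le (hf : f ∈ boundedFunctions G ℝ) (h : ∀ x, f x ≤ C) : upperMean f ≤ C :=
  csInf_le (bddBelow_upperAverages hf) (mem_upperAverages_of_le h)

lemma upperMean_add_le (hf : f ∈ boundedFunctions G ℝ) (hg : g ∈ boundedFunctions G ℝ) :
    upperMean (f + g) ≤ upperMean f + upperMean g := by
  unfold upperMean
  rw [← csInf_add (upperAverages_nonempty hf) (bddBelow_upperAverages hf)
    (upperAverages_nonempty hg) (bddBelow_upperAverages hg)]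
  refine csInf_le_csInf (bddBelow_upperAverages (add_mem hf hg))
    ((upperAverages_nonempty hf).add (upperAverages_nonempty hg)) ?_
  rintro _ ⟨c, hc, d, hd, rfl⟩
  exact add_mem_upperAverages hc hd

lemma upperAverages_smul {a : ℝ} (ha : 0 < a) :
    upperAverages (a • f) = a • upperAverages f := by
  ext c
  rw [Set.mem_smul_set_iff_inv_smul_mem₀ ha.ne']
  have key : ∀ s n : ℝ, a * s ≤ n * c ↔ s ≤ n * (a⁻¹ • c) := fun s n => by
    rw [smul_eq_mul, ← mul_assoc, mul_right_comm, ← div_eq_mul_inv, le_div_iff₀ ha, mul_comm s]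
  simp only [upperAverages, Set.mem_ofPred_eq, Pi.smul_apply, smul_eq_mul, ← Finset.mul_sum, key]

lemma upperMean_smul {a : ℝ} (ha : 0 < a) : upperMean (a • f) = a * upperMean f := by
  rw [upperMean, upperAverages_smul ha, Real.sInf_smul_of_nonneg ha.le, smul_eq_mul, upperMean]

lemma upperMean_comp_add_sub_le (hf : f ∈ boundedFunctions G ℝ) (a : G) :
    upperMean (fun x => f (x + a) - f x) ≤ 0 := by
  have hdiff : (fun x => f (x + a) - f x) ∈ boundedFunctions G ℝ :=
    sub_mem (comp_add_mem_boundedFunctions hf a) hf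
  obtain ⟨C, hC⟩ := hf
  have hmem : ∀ n : ℕ, 0 < n → 2 * C / n ∈ upperAverages fun x => f (x + a) - f x := by
    intro n hn
    -- averaging over `0, a, …, (n - 1) • a` telescopes
    refine ⟨n, hn, fun i => (i : ℕ) • a, fun x => ?_⟩
    have telescope : ∑ i : Fin n, (f (x + (i : ℕ) • a + a) - f (x + (i : ℕ) • a))
        = f (x + n • a) - f (x + 0 • a) := by
      rw [Fin.sum_univ_eq_sum_range (fun i => f (x + i • a + a) - f (x + i • a)),
        ← Finset.sum_range_sub (fun i => f (x + i • a)) n]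
      simp only [succ_nsmul, add_assoc]
    rw [mul_div_cancel₀ _ (by exact_mod_cast hn.ne')]
    linarith [abs_le.1 (hC (x + n • a)), abs_le.1 (hC (x + 0 • a))]
  refine ge_of_tendsto (tendsto_const_div_atTop_nhds_zero_nat (2 * C)) ?_
  filter_upwards [eventually_gt_atTop 0] with n hn
  exact csInf_le (bddBelow_upperAverages hdiff) (hmem n hn)

lemma isInvariantMean_of_le_upperMean (M : (G → ℝ) →ₗ[ℝ] ℝ)
    (hM : ∀ f ∈ boundedFunctions G ℝ, M f ≤ upperMean f) : IsInvariantMean M := by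
  have map_le_of_le : ∀ f ∈ boundedFunctions G ℝ, ∀ C, (∀ x, f x ≤ C) → M f ≤ C :=
    fun f hf C h => (hM f hf).trans (upperMean_le hf h)
  have comp_add_sub_le : ∀ f ∈ boundedFunctions G ℝ, ∀ a, M (fun x => f (x + a)) - M f ≤ 0 :=
    fun f hf a => by
      rw [← map_sub]
      exact (hM _ (sub_mem (comp_add_mem_boundedFunctions hf a) hf)).trans
        (upperMean_comp_add_sub_le hf a)
  refine ⟨fun f C h => ?_, fun f hf a => ?_, fun c => ?_⟩
  · have hf : f ∈ boundedFunctions G ℝ := ⟨C, h⟩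
    have h₁ := map_le_of_le f hf C fun x => (abs_le.1 (h x)).2
    have h₂ := map_le_of_le (-f) (neg_mem hf) C fun x => neg_le.1 (abs_le.1 (h x)).1
    rw [map_neg] at h₂
    exact abs_le.2 ⟨by linarith, h₁⟩
  · have h₁ := comp_add_sub_le f hf a
    have h₂ : M (-fun x => f (x + a)) - M (-f) ≤ 0 := comp_add_sub_le (-f) (neg_mem hf) a
    rw [map_neg, map_neg] at h₂
    linarith
  · have hone : (fun _ : G => (1 : ℝ)) ∈ boundedFunctions G ℝ := ⟨1, fun _ => by simp⟩
    have h₁ := map_le_of_le _ hone 1 fun _ => le_rfl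
    have h₂ := map_le_of_le _ (neg_mem hone) (-1) fun _ => le_rfl
    rw [map_neg] at h₂
    have hconst : (fun _ : G => c) = c • fun _ => (1 : ℝ) := by ext; simp
    rw [hconst, map_smul, smul_eq_mul, show M (fun _ => 1) = 1 by linarith, mul_one]

theorem exists_isInvariantMean_real : ∃ M : (G → ℝ) →ₗ[ℝ] ℝ, IsInvariantMean M := by
  obtain ⟨φ, hφ⟩ := exists_linearMap_le_sublinear (V := boundedFunctions G ℝ)
    (fun f => upperMean (f : G → ℝ)) (fun c hc f => by rw [Submodule.coe_smul, upperMean_smul hc])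
    (fun f g => by rw [Submodule.coe_add]; exact upperMean_add_le f.2 g.2)
  obtain ⟨M, hM⟩ := φ.exists_extend
  exact ⟨M, isInvariantMean_of_le_upperMean M fun f hf =>
    (LinearMap.congr_fun hM ⟨f, hf⟩).le.trans (hφ _)⟩

end InvariantMean

section DualMean

variable {G E F : Type*} [NormedAddCommGroup E] [NormedSpace ℝ E]
  [NormedAddCommGroup F] [NormedSpace ℝ F]

noncomputable def pairingMean (m : (G → ℝ) →ₗ[ℝ] ℝ) (e : E ≃ₗᵢ[ℝ] (F →L[ℝ] ℝ)) :
    (G → E) →ₗ[ℝ] F →ₗ[ℝ] ℝ :=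
  LinearMap.mk₂ ℝ (fun f v => m fun x => e (f x) v)
    (fun f g v => by rw [← map_add]; congr 1; ext; simp)
    (fun c f v => by rw [← map_smul]; congr 1; ext; simp)
    (fun f v w => by rw [← map_add]; congr 1; ext; simp)
    (fun c f v => by rw [← map_smul]; congr 1; ext; simp)

lemma norm_dual_apply_le (e : E ≃ₗᵢ[ℝ] (F →L[ℝ] ℝ)) {f : G → E} {C : ℝ}
    (hf : ∀ x, ‖f x‖ ≤ C) (v : F) (x : G) : ‖e (f x) v‖ ≤ C * ‖v‖ :=
  ((e (f x)).le_opNorm v).trans <| by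
    rw [e.norm_map]; exact mul_le_mul_of_nonneg_right (hf x) (norm_nonneg v)

lemma IsInvariantMean.norm_pairingMean_le [Add G] {m : (G → ℝ) →ₗ[ℝ] ℝ} (hm : IsInvariantMean m)
    (e : E ≃ₗᵢ[ℝ] (F →L[ℝ] ℝ)) {f : G → E} {C : ℝ} (hf : ∀ x, ‖f x‖ ≤ C) (v : F) :
    ‖pairingMean m e f v‖ ≤ C * ‖v‖ :=
  hm.norm_le _ _ (norm_dual_apply_le e hf v)

theorem exists_isInvariantMean_of_dual [AddCommGroup G] (e : E ≃ₗᵢ[ℝ] (F →L[ℝ] ℝ)) :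
    ∃ M : (G → E) →ₗ[ℝ] E, IsInvariantMean M := by
  obtain ⟨m, hm⟩ := InvariantMean.exists_isInvariantMean_real (G := G)
  -- `r` extends `f ↦ e.symm (pairingMean m e f)` from bounded `f` to all `f`.
  obtain ⟨r, hr⟩ := LinearMap.exists_leftInverse_of_injective
    (ContinuousLinearMap.coeLM ℝ : (F →L[ℝ] ℝ) →ₗ[ℝ] F →ₗ[ℝ] ℝ)
    (LinearMap.ker_eq_bot.2 ContinuousLinearMap.coe_injective)
  let M := e.symm.toLinearMap ∘ₗ r ∘ₗ pairingMean m e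
  have key : ∀ (f : G → E) (C : ℝ), (∀ x, ‖f x‖ ≤ C) →
      ∀ v, e (M f) v = m fun x => e (f x) v := by
    intro f C hf v
    let ψ := (pairingMean m e f).mkContinuous C (hm.norm_pairingMean_le e hf)
    have hrψ : r (pairingMean m e f) = ψ := LinearMap.congr_fun hr ψ
    change e (e.symm (r (pairingMean m e f))) v = _
    rw [hrψ, e.apply_symm_apply]
    rfl
  refine ⟨M, fun f C hf => ?_, fun f ⟨C, hf⟩ a => ?_, fun c => ?_⟩
  · rw [← e.norm_map]
    refine ContinuousLinearMap.opNorm_le_bound _ ((norm_nonneg _).trans (hf 0)) fun v => ?_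
    rw [key f C hf v]
    exact hm.norm_pairingMean_le e hf v
  · refine e.injective (ContinuousLinearMap.ext fun v => ?_)
    rw [key _ C (fun x => hf (x + a)), key f C hf]
    exact hm.map_comp_add _ ⟨_, norm_dual_apply_le e hf v⟩ a
  · refine e.injective (ContinuousLinearMap.ext fun v => ?_)
    rw [key _ ‖c‖ fun _ => le_rfl]
    exact hm.map_const _

end DualMean

lemma map_real_smul_of_norm_le {V W : Type*} [NormedAddCommGroup V] [NormedSpace ℝ V]
    [NormedAddCommGroup W] [NormedSpace ℝ W] {f : V → W} (hf : ∀ x y, f (x + y) = f x + f y)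
    {C : ℝ} (hC : ∀ x, ‖f x‖ ≤ C * ‖x‖) (c : ℝ) (x : V) : f (c • x) = c • f x :=
  map_real_smul (AddMonoidHom.mk' f hf) (AddMonoidHomClass.continuous_of_bound _ C hC) c x

section BilinProj

variable {X Y E : Type*} [NormedAddCommGroup X] [NormedAddCommGroup Y] [NormedAddCommGroup E]
  [NormedSpace ℝ E]

/-- `mixedDiff T x y` is the paper's `φ_T^{x,y}`. -/
def mixedDiff : (X → Y → E) →ₗ[ℝ] X → Y → X × Y → E where
  toFun T x y p := T (p.1 + x) (p.2 + y) - T (p.1 + x) p.2 - T p.1 (p.2 + y) + T p.1 p.2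
  map_add' T S := by ext; simp only [Pi.add_apply]; abel
  map_smul' c T := by ext; simp only [Pi.smul_apply, smul_sub, smul_add, RingHom.id_apply]

lemma mixedDiff_apply (T : X → Y → E) (x : X) (y : Y) (p : X × Y) :
    mixedDiff T x y p = T (p.1 + x) (p.2 + y) - T (p.1 + x) p.2 - T p.1 (p.2 + y) + T p.1 p.2 :=
  rfl

lemma TwoLipWith.norm_mixedDiff_le {k : ℝ} {T : X → Y → E} (hT : TwoLipWith k T)
    (x : X) (y : Y) (p : X × Y) : ‖mixedDiff T x y p‖ ≤ k * ‖x‖ * ‖y‖ := by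
  have h := hT (p.1 + x) p.1 (p.2 + y) p.2
  rwa [add_sub_cancel_left, add_sub_cancel_left, sub_right_comm] at h

lemma mixedDiff_add_left (T : X → Y → E) (x x' : X) (y : Y) :
    mixedDiff T (x + x') y = (fun p => mixedDiff T x y (p + (x', 0))) + mixedDiff T x' y := by
  ext p
  simp only [mixedDiff_apply, Pi.add_apply, Prod.fst_add, Prod.snd_add, add_zero,
    add_assoc, add_comm x' x]
  abel

lemma mixedDiff_add_right (T : X → Y → E) (x : X) (y y' : Y) :
    mixedDiff T x (y + y') = (fun p => mixedDiff T x y (p + (0, y'))) + mixedDiff T x y' := by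
  ext p
  simp only [mixedDiff_apply, Pi.add_apply, Prod.fst_add, Prod.snd_add, add_zero,
    add_assoc, add_comm y' y]
  abel

noncomputable def bilinProj (M : (X × Y → E) →ₗ[ℝ] E) : (X → Y → E) →ₗ[ℝ] X → Y → E :=
  (M.compLeft Y).compLeft X ∘ₗ mixedDiff

variable {M : (X × Y → E) →ₗ[ℝ] E} {T : X → Y → E} {k : ℝ}

lemma bilinProj_apply (x : X) (y : Y) : bilinProj M T x y = M (mixedDiff T x y) :=
  rfl

lemma IsInvariantMean.norm_bilinProj_le (hM : IsInvariantMean M) (hT : TwoLipWith k T)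
    (x : X) (y : Y) : ‖bilinProj M T x y‖ ≤ k * ‖x‖ * ‖y‖ :=
  hM.norm_le _ _ (hT.norm_mixedDiff_le x y)

lemma IsInvariantMean.bilinProj_add_left (hM : IsInvariantMean M) (hT : TwoLipWith k T)
    (x x' : X) (y : Y) : bilinProj M T (x + x') y = bilinProj M T x y + bilinProj M T x' y := by
  rw [bilinProj_apply, mixedDiff_add_left, map_add,
    hM.map_comp_add _ ⟨_, hT.norm_mixedDiff_le x y⟩]
  rfl

lemma IsInvariantMean.bilinProj_add_right (hM : IsInvariantMean M) (hT : TwoLipWith k T)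
    (x : X) (y y' : Y) : bilinProj M T x (y + y') = bilinProj M T x y + bilinProj M T x y' := by
  rw [bilinProj_apply, mixedDiff_add_right, map_add,
    hM.map_comp_add _ ⟨_, hT.norm_mixedDiff_le x y⟩]
  rfl

variable [NormedSpace ℝ X] [NormedSpace ℝ Y]

lemma mixedDiff_of_isBilin {T : X → Y → E} (hT : IsBilin T) (x : X) (y : Y) :
    mixedDiff T x y = fun _ => T x y := by
  obtain ⟨add_left, -, add_right, -⟩ := hT
  ext p
  simp only [mixedDiff_apply, add_left, add_right]
  abel

lemma IsInvariantMean.isBilin_bilinProj (hM : IsInvariantMean M) (hT : TwoLipWith k T) :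
    IsBilin (bilinProj M T) := by
  refine ⟨hM.bilinProj_add_left hT, fun c x y => ?_, hM.bilinProj_add_right hT, fun c x y => ?_⟩
  · exact map_real_smul_of_norm_le (hM.bilinProj_add_left hT · · y) (C := k * ‖y‖)
      (fun x => (hM.norm_bilinProj_le hT x y).trans_eq (mul_right_comm _ _ _)) c x
  · exact map_real_smul_of_norm_le (hM.bilinProj_add_right hT x) (C := k * ‖x‖)
      (hM.norm_bilinProj_le hT x) c y

lemma IsInvariantMean.bilinProj_eq_self (hM : IsInvariantMean M) (hT : IsBilin T) :
    bilinProj M T = T := by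
  ext x y
  rw [bilinProj_apply, mixedDiff_of_isBilin hT, hM.map_const]

end BilinProj

theorem stmt_9_general {X Y E F : Type*} [NormedAddCommGroup X] [NormedSpace ℝ X]
    [NormedAddCommGroup Y] [NormedSpace ℝ Y] [NormedAddCommGroup E] [NormedSpace ℝ E]
    [NormedAddCommGroup F] [NormedSpace ℝ F]
    (e : E ≃ₗᵢ[ℝ] (F →L[ℝ] ℝ)) :
    ∃ P : (X → Y → E) →ₗ[ℝ] (X → Y → E),
      (∀ T : X → Y → E, MemBLip0 T → IsBilin (P T)) ∧
      (∀ (T : X → Y → E) (k : ℝ), 0 ≤ k → TwoLipWith k T → MemBLip0 T →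
        ∀ (x : X) (y : Y), ‖P T x y‖ ≤ k * ‖x‖ * ‖y‖) ∧
      (∀ T : X → Y → E, MemBLip0 T → IsBilin T → P T = T) := by
  obtain ⟨M, hM⟩ := exists_isInvariantMean_of_dual (G := X × Y) e
  refine ⟨bilinProj M, fun T ⟨⟨k, _, hT⟩, _⟩ => hM.isBilin_bilinProj hT,
    fun T k _ hT _ => hM.norm_bilinProj_le hT, fun T _ hT => hM.bilinProj_eq_self hT⟩

/-- if `X, Y` are real normed spaces and `E` is a dual Banach space
(`E ≅ F*` isometrically for some Banach space `F`), then there is a norm-one linear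
projection `P` from `BLip₀(X,Y;E)` onto `Blin(X,Y;E)`: `P` is linear, `P T` is bilinear
for every two-Lipschitz `T`, `P S = S` for bilinear `S`, and `‖P T‖ ≤ BLip(T)`
(expressed by `‖P T (x,y)‖ ≤ k‖x‖‖y‖` for any two-Lipschitz constant `k` of `T`).
In particular `Blin(X,Y;E)` is complemented in `BLip₀(X,Y;E)`. -/
theorem stmt_9 {X Y E F : Type*} [NormedAddCommGroup X] [NormedSpace ℝ X]
    [NormedAddCommGroup Y] [NormedSpace ℝ Y] [NormedAddCommGroup E] [NormedSpace ℝ E]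
    [NormedAddCommGroup F] [NormedSpace ℝ F] [CompleteSpace F]
    (e : E ≃ₗᵢ[ℝ] (F →L[ℝ] ℝ)) :
    ∃ P : (X → Y → E) →ₗ[ℝ] (X → Y → E),
      (∀ T : X → Y → E, MemBLip0 T → IsBilin (P T)) ∧
      (∀ (T : X → Y → E) (k : ℝ), 0 ≤ k → TwoLipWith k T → MemBLip0 T →
        ∀ (x : X) (y : Y), ‖P T x y‖ ≤ k * ‖x‖ * ‖y‖) ∧
      (∀ T : X → Y → E, MemBLip0 T → IsBilin T → P T = T) :=
  stmt_9_general e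
end

section
/- A two-Lipschitz operator T ∈ BLip₀(X,Y;E) is bilinear if and only if its linearization T_L vanishes on the subspace ker(β_X) ⊗̂_π F(Y) + F(X) ⊗̂_π ker(β_Y) of F(X) ⊗̂_π F(Y), where β_X : F(X) → X is the canonical barycenter/linearization map (the linear contraction with β_X(δ_x) = x). -/
/-!
If `T` is bilinear, the rectangle bound makes it a continuous bilinear map `Φ`, and the two
continuous bilinear maps `(μ, ν) ↦ T_L (μ ⊗ ν)` and `(μ, ν) ↦ Φ (β_X μ) (β_Y ν)` agree on
`δ_x ⊗ δ_y`, hence everywhere by density; the latter visibly vanishes when `β_X μ = 0` or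
`β_Y ν = 0`. Conversely, if `T_L (· ⊗ ν)` vanishes on `ker β_X`, then `T_L (μ ⊗ ν)` depends
on `μ` only through `β_X μ`, so `δ_{x + x'}` may be replaced by `δ_x + δ_{x'}` (and `δ_{c x}`
by `c δ_x`), which gives linearity in `x`; symmetrically in `y`.
-/

section

variable {𝕜 : Type*} [NontriviallyNormedField 𝕜]
  {F G E : Type*} [NormedAddCommGroup F] [NormedSpace 𝕜 F]
  [NormedAddCommGroup G] [NormedSpace 𝕜 G] [NormedAddCommGroup E] [NormedSpace 𝕜 E]

theorem ContinuousLinearMap.ext_on₂ {s : Set F} {t : Set G}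
    (hs : Dense (Submodule.span 𝕜 s : Set F)) (ht : Dense (Submodule.span 𝕜 t : Set G))
    {B C : F →L[𝕜] G →L[𝕜] E} (h : ∀ μ ∈ s, ∀ ν ∈ t, B μ ν = C μ ν) : B = C :=
  ext_on hs fun _ hμ => ext_on ht fun _ hν => h _ hμ _ hν

theorem LinearMap.norm_apply₂_le_of_rectangle_le {X Y : Type*}
    [SeminormedAddCommGroup X] [Module 𝕜 X] [SeminormedAddCommGroup Y] [Module 𝕜 Y]
    (f : X →ₗ[𝕜] Y →ₗ[𝕜] E) {k : ℝ}
    (h : ∀ x x' y y', ‖f x y - f x' y - f x y' + f x' y'‖ ≤ k * ‖x - x'‖ * ‖y - y'‖)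
    (x : X) (y : Y) : ‖f x y‖ ≤ k * ‖x‖ * ‖y‖ := by
  simpa using h x 0 y 0

end

theorem LinearMap.map_eq_of_ker_le {R F X G : Type*} [Ring R] [AddCommGroup F] [Module R F]
    [AddCommGroup X] [Module R X] [AddCommGroup G] [Module R G]
    {β : F →ₗ[R] X} {L : F →ₗ[R] G} (hL : ∀ μ, β μ = 0 → L μ = 0) {μ μ' : F}
    (h : β μ = β μ') : L μ = L μ' := by
  rw [← sub_eq_zero, ← map_sub]
  exact hL _ (by rw [map_sub, h, sub_self])

theorem LinearMap.isLinearMap_comp_of_ker_le {R F X G : Type*} [Ring R] [AddCommGroup F]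
    [Module R F] [AddCommGroup X] [Module R X] [AddCommGroup G] [Module R G]
    {β : F →ₗ[R] X} {δ : X → F} (hβ : ∀ x, β (δ x) = x)
    {L : F →ₗ[R] G} (hL : ∀ μ, β μ = 0 → L μ = 0) : IsLinearMap R (L ∘ δ) where
  map_add x x' := by
    simp only [Function.comp_apply, ← map_add]
    exact map_eq_of_ker_le hL (by rw [map_add, hβ, hβ, hβ])
  map_smul c x := by
    simp only [Function.comp_apply, ← map_smul]
    exact map_eq_of_ker_le hL (by rw [map_smul, hβ, hβ])

theorem stmt_17_general {X Y E FX FY Z : Type*}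
    [NormedAddCommGroup X] [NormedSpace ℝ X]
    [NormedAddCommGroup Y] [NormedSpace ℝ Y]
    [NormedAddCommGroup E] [NormedSpace ℝ E]
    [NormedAddCommGroup FX] [NormedSpace ℝ FX]
    [NormedAddCommGroup FY] [NormedSpace ℝ FY]
    [NormedAddCommGroup Z] [NormedSpace ℝ Z]
    (δX : X → FX)
    (hdX : Dense ((Submodule.span ℝ (Set.range δX) : Submodule ℝ FX) : Set FX))
    (δY : Y → FY)
    (hdY : Dense ((Submodule.span ℝ (Set.range δY) : Submodule ℝ FY) : Set FY))
    (βX : FX →L[ℝ] X) (hβX : ∀ x : X, βX (δX x) = x)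
    (βY : FY →L[ℝ] Y) (hβY : ∀ y : Y, βY (δY y) = y)
    (tensor : FX →L[ℝ] FY →L[ℝ] Z)
    (T : X → Y → E) (k : ℝ)
    (hTk : ∀ (x x' : X) (y y' : Y),
      ‖T x y - T x' y - T x y' + T x' y'‖ ≤ k * ‖x - x'‖ * ‖y - y'‖)
    (TL : Z →L[ℝ] E) (hTL : ∀ (x : X) (y : Y), T x y = TL (tensor (δX x) (δY y))) :
    ((∀ (x x' : X) (y : Y), T (x + x') y = T x y + T x' y) ∧
     (∀ (c : ℝ) (x : X) (y : Y), T (c • x) y = c • T x y) ∧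
     (∀ (x : X) (y y' : Y), T x (y + y') = T x y + T x y') ∧
     (∀ (c : ℝ) (x : X) (y : Y), T x (c • y) = c • T x y))
    ↔ ((∀ (μ : FX) (ν : FY), βX μ = 0 → TL (tensor μ ν) = 0) ∧
       (∀ (μ : FX) (ν : FY), βY ν = 0 → TL (tensor μ ν) = 0)) := by
  constructor
  · rintro ⟨haddX, hsmulX, haddY, hsmulY⟩
    let Φ : X →L[ℝ] Y →L[ℝ] E := (LinearMap.mk₂ ℝ T haddX hsmulX haddY hsmulY).mkContinuous₂ k
      (LinearMap.norm_apply₂_le_of_rectangle_le _ hTk)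
    have hfactor : (ContinuousLinearMap.compL ℝ FY Z E TL).comp tensor = Φ.bilinearComp βX βY :=
      ContinuousLinearMap.ext_on₂ hdX hdY <| by
        rintro _ ⟨x, rfl⟩ _ ⟨y, rfl⟩
        simp [Φ, hβX, hβY, hTL]
    have hTL_eq (μ : FX) (ν : FY) : TL (tensor μ ν) = Φ (βX μ) (βY ν) := by
      simpa using congr($hfactor μ ν)
    exact ⟨fun μ ν hμ => by rw [hTL_eq, hμ, map_zero, zero_apply],
      fun μ ν hν => by rw [hTL_eq, hν, map_zero]⟩
  · rintro ⟨hkerX, hkerY⟩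
    have hlinX (y : Y) := LinearMap.isLinearMap_comp_of_ker_le hβX
      (L := (TL.comp (tensor.flip (δY y)) : FX →ₗ[ℝ] E)) fun μ hμ => hkerX μ _ hμ
    have hlinY (x : X) := LinearMap.isLinearMap_comp_of_ker_le hβY
      (L := (TL.comp (tensor (δX x)) : FY →ₗ[ℝ] E)) fun ν hν => hkerY _ ν hν
    simp only [hTL]
    exact ⟨fun x x' y => (hlinX y).map_add x x', fun c x y => (hlinX y).map_smul c x,
      fun x y y' => (hlinY x).map_add y y', fun c x y => (hlinY x).map_smul c y⟩

/-- a two-Lipschitz operator `T ∈ BLip₀(X,Y;E)` is bilinear if and only if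
its linearization `T_L` vanishes on the subspace
`ker(β_X) ⊗̂_π F(Y) + F(X) ⊗̂_π ker(β_Y)` of `F(X) ⊗̂_π F(Y)`.
Here `FX, FY` stand for the Lipschitz-free spaces `F(X), F(Y)` (Banach spaces with
evaluation maps `δX, δY` of dense linear span and `‖δ x‖ = ‖x‖`), `βX, βY` are the
barycenter maps (`βX (δX x) = x`), `Z` stands for `F(X) ⊗̂_π F(Y)` with canonical
continuous bilinear map `tensor` (`‖μ ⊗ ν‖_π ≤ ‖μ‖‖ν‖`), and `TL` is the linearization
of `T`, i.e. `T x y = TL (δ_x ⊗ δ_y)`. Vanishing of the continuous map `TL` on the stated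
subspace is expressed by vanishing on its generating elementary tensors `μ ⊗ ν` with
`μ ∈ ker βX` or `ν ∈ ker βY`. -/
theorem stmt_17 {X Y E FX FY Z : Type*}
    [NormedAddCommGroup X] [NormedSpace ℝ X] [CompleteSpace X]
    [NormedAddCommGroup Y] [NormedSpace ℝ Y] [CompleteSpace Y]
    [NormedAddCommGroup E] [NormedSpace ℝ E] [CompleteSpace E]
    [NormedAddCommGroup FX] [NormedSpace ℝ FX] [CompleteSpace FX]
    [NormedAddCommGroup FY] [NormedSpace ℝ FY] [CompleteSpace FY]
    [NormedAddCommGroup Z] [NormedSpace ℝ Z] [CompleteSpace Z]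
    (δX : X → FX) (hδX : ∀ x : X, ‖δX x‖ = ‖x‖)
    (hdX : Dense ((Submodule.span ℝ (Set.range δX) : Submodule ℝ FX) : Set FX))
    (δY : Y → FY) (hδY : ∀ y : Y, ‖δY y‖ = ‖y‖)
    (hdY : Dense ((Submodule.span ℝ (Set.range δY) : Submodule ℝ FY) : Set FY))
    (βX : FX →L[ℝ] X) (hβX : ∀ x : X, βX (δX x) = x)
    (βY : FY →L[ℝ] Y) (hβY : ∀ y : Y, βY (δY y) = y)
    (tensor : FX →L[ℝ] FY →L[ℝ] Z)
    (hten : ∀ (μ : FX) (ν : FY), ‖tensor μ ν‖ ≤ ‖μ‖ * ‖ν‖)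
    (hdZ : Dense ((Submodule.span ℝ
      {ζ : Z | ∃ (μ : FX) (ν : FY), ζ = tensor μ ν} : Submodule ℝ Z) : Set Z))
    (T : X → Y → E) (k : ℝ)
    (hTk : ∀ (x x' : X) (y y' : Y),
      ‖T x y - T x' y - T x y' + T x' y'‖ ≤ k * ‖x - x'‖ * ‖y - y'‖)
    (hT1 : ∀ x : X, T x 0 = 0) (hT2 : ∀ y : Y, T 0 y = 0)
    (TL : Z →L[ℝ] E) (hTL : ∀ (x : X) (y : Y), T x y = TL (tensor (δX x) (δY y))) :
    ((∀ (x x' : X) (y : Y), T (x + x') y = T x y + T x' y) ∧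
     (∀ (c : ℝ) (x : X) (y : Y), T (c • x) y = c • T x y) ∧
     (∀ (x : X) (y y' : Y), T x (y + y') = T x y + T x y') ∧
     (∀ (c : ℝ) (x : X) (y : Y), T x (c • y) = c • T x y))
    ↔ ((∀ (μ : FX) (ν : FY), βX μ = 0 → TL (tensor μ ν) = 0) ∧
       (∀ (μ : FX) (ν : FY), βY ν = 0 → TL (tensor μ ν) = 0)) :=
  stmt_17_general δX hdX δY hdY βX hβX βY hβY tensor T k hTk TL hTL
end
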